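/- arXiv:1212.1444 — 4 statements merged into one kernel-verified Lean document; each statement's English description precedes it below -/
import Mathlib

section
/- For all real numbers a, μ, y and every h > 0, the integral of z ↦ sin(a(y − μh + z)) · exp(μ(y − μh + z)) with respect to the Gaussian measure on ℝ with mean 0 and variance h equals sin(a·y) · exp(μ·y) · exp(−(μ² + a²)·h/2). -/
open MeasureTheory ProbabilityTheory Complex
open scoped NNReal

/-!
Writing `sin (a x) e^{b x} = Im e^{(b + a i) x}`, the Gaussian integral is the imaginary part of
the complex moment generating function `w ↦ exp (w m + v w² / 2)` of `𝒩(m, v)` at `w = b + a i`.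
With `m = y - μ h`, the drift correction `- μ h` exactly cancels the phase `v a b` this produces.
-/

lemma integrable_cexp_mul_gaussianReal (m : ℝ) (v : ℝ≥0) (w : ℂ) :
    Integrable (fun x : ℝ ↦ cexp (w * x)) (gaussianReal m v) :=
  integrable_cexp_mul_of_re_mem_integrableExpSet aemeasurable_id (by simp)

lemma integral_sin_mul_exp_gaussianReal (a b m : ℝ) (v : ℝ≥0) :
    ∫ x, Real.sin (a * x) * Real.exp (b * x) ∂gaussianReal m v
      = Real.sin (a * (m + v * b)) * Real.exp (b * m + v * (b ^ 2 - a ^ 2) / 2) := by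
  have h_im (x : ℝ) : Real.sin (a * x) * Real.exp (b * x) = (cexp ((b + a * I) * x)).im := by
    rw [exp_im, mul_comm]
    simp
  simp_rw [h_im]
  rw [← RCLike.im_eq_complex_im, integral_im (integrable_cexp_mul_gaussianReal m v _)]
  change (complexMGF id (gaussianReal m v) (b + a * I)).im = _
  have h_exponent : (b + a * I) * m + v * (b + a * I) ^ 2 / 2
      = ((b * m + v * (b ^ 2 - a ^ 2) / 2 : ℝ) : ℂ) + ((a * (m + v * b) : ℝ) : ℂ) * I := by
    push_cast
    linear_combination (v * a ^ 2 / 2 : ℂ) * I_sq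
  rw [complexMGF_id_gaussianReal, h_exponent, exp_add, ← ofReal_exp, im_ofReal_mul,
    exp_ofReal_mul_I_im, mul_comm]

/-- For all real `a, μ, y` and every `h > 0`, the integral of
`z ↦ sin(a(y − μh + z)) · exp(μ(y − μh + z))` with respect to the Gaussian measure on `ℝ`
with mean `0` and variance `h` equals `sin(a·y) · exp(μ·y) · exp(−(μ² + a²)·h/2)`. -/
theorem gaussian_integral_sin_exp (a μ y h : ℝ) (hh : 0 < h) :
    ∫ z, Real.sin (a * (y - μ * h + z)) * Real.exp (μ * (y - μ * h + z))
        ∂(gaussianReal 0 h.toNNReal)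
      = Real.sin (a * y) * Real.exp (μ * y) * Real.exp (-((μ ^ 2 + a ^ 2) * h / 2)) := by
  have h_shift := integral_map (μ := gaussianReal 0 h.toNNReal) (φ := (y - μ * h + ·))
    (f := fun x ↦ Real.sin (a * x) * Real.exp (μ * x)) (by fun_prop) (by fun_prop)
  rw [← h_shift, gaussianReal_map_const_add, zero_add, integral_sin_mul_exp_gaussianReal,
    Real.coe_toNNReal h hh.le, mul_assoc, ← Real.exp_add]
  congr 2 <;> ring
end

section
/- Let K > 0, μ ≥ 0, β > 0, m > 1 and λ(K) = (m−1)β − μ²/2 − π²/(2K²). Let F : ℝ → ℝ and let p : (0,K) → (0,1) be twice differentiable with (1/2)p''(x) − μp'(x) = F(1 − p(x)) for all x ∈ (0,K). Then f(x) := sin(πx/K) e^{μx} / p(x) satisfies, for all x ∈ (0,K), (1/2)f''(x) − (μ − p'(x)/p(x))·f'(x) + ((m−1)β + F(1−p(x))/p(x))·f(x) = λ(K)·f(x). -/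
/-!
Write `L = ½ d²/dx² − μ d/dx` for the generator of Brownian motion with drift `−μ` and
`g = f p = sin(πx/K) e^{μx}`. Expanding `L (g / p)` by the quotient rule gives the Doob
`h`-transform identity `½ f'' − (μ − p'/p) f' + (L p / p) f = L g / p`, and the ODE says exactly
`L p = F(1 − p)`. So the backbone operator sends `f` to `L g / p + (m − 1) β f`, and `g` is an
eigenfunction of `L` with eigenvalue `−μ²/2 − π²/(2K²)`.
-/

open Filter Topology Real

noncomputable def bmDriftGenerator (μ : ℝ) (h : ℝ → ℝ) (x : ℝ) : ℝ :=
  1 / 2 * deriv (deriv h) x - μ * deriv h x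

theorem bmDriftGenerator_div {μ x : ℝ} {g p : ℝ → ℝ}
    (hg : ∀ᶠ y in 𝓝 x, DifferentiableAt ℝ g y) (hp : ∀ᶠ y in 𝓝 x, DifferentiableAt ℝ p y)
    (hp₀ : ∀ᶠ y in 𝓝 x, p y ≠ 0) (hg' : DifferentiableAt ℝ (deriv g) x)
    (hp' : DifferentiableAt ℝ (deriv p) x) :
    1 / 2 * deriv (deriv fun y => g y / p y) x
        - (μ - deriv p x / p x) * deriv (fun y => g y / p y) x
        + bmDriftGenerator μ p x / p x * (g x / p x)
      = bmDriftGenerator μ g x / p x := by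
  have hq : deriv (fun y => g y / p y) =ᶠ[𝓝 x]
      fun y => (deriv g y * p y - g y * deriv p y) / p y ^ 2 := by
    filter_upwards [hg, hp, hp₀] with y hgy hpy hpy₀
    exact (hgy.hasDerivAt.div hpy.hasDerivAt hpy₀).deriv
  have hx₀ : p x ≠ 0 := hp₀.self_of_nhds
  have hq' : HasDerivAt (fun y => (deriv g y * p y - g y * deriv p y) / p y ^ 2) _ x :=
    ((hg'.hasDerivAt.mul hp.self_of_nhds.hasDerivAt).sub
      (hg.self_of_nhds.hasDerivAt.mul hp'.hasDerivAt)).div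
      (hp.self_of_nhds.hasDerivAt.pow 2) (pow_ne_zero 2 hx₀)
  rw [hq.deriv_eq, hq'.deriv, hq.eq_of_nhds]
  unfold bmDriftGenerator
  simp only [Pi.mul_apply, Pi.sub_apply]
  field_simp
  ring

theorem bmDriftGenerator_sin_mul_exp (μ ω x : ℝ) :
    bmDriftGenerator μ (fun y => sin (ω * y) * exp (μ * y)) x
      = -((μ ^ 2 + ω ^ 2) / 2) * (sin (ω * x) * exp (μ * x)) := by
  have hlin : ∀ (c y : ℝ), HasDerivAt (fun y => c * y) c y := fun c y => by
    simpa using (hasDerivAt_id y).const_mul c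
  have hd : deriv (fun y => sin (ω * y) * exp (μ * y))
      = fun y => (ω * cos (ω * y) + μ * sin (ω * y)) * exp (μ * y) := by
    funext y
    refine ((hlin ω y).sin.mul (hlin μ y).exp).deriv.trans ?_
    ring
  have hd' : HasDerivAt (fun y => (ω * cos (ω * y) + μ * sin (ω * y)) * exp (μ * y)) _ x :=
    (((hlin ω x).cos.const_mul ω).add ((hlin ω x).sin.const_mul μ)).mul (hlin μ x).exp
  unfold bmDriftGenerator
  rw [hd, hd'.deriv]
  simp only [Pi.add_apply]
  ring

theorem backbone_eigenfunction_general (K μ β m : ℝ) (F : ℝ → ℝ) (p : ℝ → ℝ)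
    (hp01 : ∀ x ∈ Set.Ioo 0 K, p x ∈ Set.Ioo (0:ℝ) 1)
    (hp1 : ∀ x ∈ Set.Ioo 0 K, DifferentiableAt ℝ p x)
    (hp2 : ∀ x ∈ Set.Ioo 0 K, DifferentiableAt ℝ (deriv p) x)
    (hode : ∀ x ∈ Set.Ioo 0 K, (1/2) * deriv (deriv p) x - μ * deriv p x = F (1 - p x)) :
    ∀ x ∈ Set.Ioo 0 K,
      (1/2) * deriv (deriv (fun y => Real.sin (Real.pi * y / K) * Real.exp (μ * y) / p y)) x
        - (μ - deriv p x / p x) *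
            deriv (fun y => Real.sin (Real.pi * y / K) * Real.exp (μ * y) / p y) x
        + ((m - 1) * β + F (1 - p x) / p x) *
            (Real.sin (Real.pi * x / K) * Real.exp (μ * x) / p x)
      = ((m - 1) * β - μ ^ 2 / 2 - Real.pi ^ 2 / (2 * K ^ 2)) *
          (Real.sin (Real.pi * x / K) * Real.exp (μ * x) / p x) := by
  intro x hx
  have hnear : ∀ᶠ y in 𝓝 x, y ∈ Set.Ioo 0 K := isOpen_Ioo.mem_nhds hx
  have hg : ContDiff ℝ 2 fun y => sin (π * y / K) * exp (μ * y) := by fun_prop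
  have hLg := bmDriftGenerator_sin_mul_exp μ (π / K) x
  simp only [div_mul_eq_mul_div π K] at hLg
  have hLp : bmDriftGenerator μ p x = F (1 - p x) := hode x hx
  have hdiv := bmDriftGenerator_div (μ := μ)
    (.of_forall (hg.differentiable two_ne_zero))
    (hnear.mono hp1) (hnear.mono fun y hy => (hp01 y hy).1.ne') (hg.differentiable_deriv_two x)
    (hp2 x hx)
  rw [hLg, hLp] at hdiv
  linear_combination hdiv

/-- If `p : (0,K) → (0,1)` is twice differentiable with
`(1/2)p'' − μp' = F(1−p)` on `(0,K)`, then `f(x) = sin(πx/K)e^{μx}/p(x)` satisfies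
`(1/2)f'' − (μ − p'/p)f' + ((m−1)β + F(1−p)/p)f = λ(K)f` on `(0,K)`, where
`λ(K) = (m−1)β − μ²/2 − π²/(2K²)`. -/
theorem backbone_eigenfunction (K μ β m : ℝ) (hK : 0 < K) (hμ : 0 ≤ μ) (hβ : 0 < β)
    (hm : 1 < m) (F : ℝ → ℝ) (p : ℝ → ℝ)
    (hp01 : ∀ x ∈ Set.Ioo 0 K, p x ∈ Set.Ioo (0:ℝ) 1)
    (hp1 : ∀ x ∈ Set.Ioo 0 K, DifferentiableAt ℝ p x)
    (hp2 : ∀ x ∈ Set.Ioo 0 K, DifferentiableAt ℝ (deriv p) x)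
    (hode : ∀ x ∈ Set.Ioo 0 K, (1/2) * deriv (deriv p) x - μ * deriv p x = F (1 - p x)) :
    ∀ x ∈ Set.Ioo 0 K,
      (1/2) * deriv (deriv (fun y => Real.sin (Real.pi * y / K) * Real.exp (μ * y) / p y)) x
        - (μ - deriv p x / p x) *
            deriv (fun y => Real.sin (Real.pi * y / K) * Real.exp (μ * y) / p y) x
        + ((m - 1) * β + F (1 - p x) / p x) *
            (Real.sin (Real.pi * x / K) * Real.exp (μ * x) / p x)
      = ((m - 1) * β - μ ^ 2 / 2 - Real.pi ^ 2 / (2 * K ^ 2)) *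
          (Real.sin (Real.pi * x / K) * Real.exp (μ * x) / p x) :=
  backbone_eigenfunction_general K μ β m F p hp01 hp1 hp2 hode
end

section
/- Let K > 0, μ ≥ 0, β > 0, m > 1 and λ(K) = (m−1)β − μ²/2 − π²/(2K²). Let F : ℝ → ℝ be continuous and let p : [0,K] → ℝ be continuously differentiable on [0,K] and twice continuously differentiable on (0,K), with p(0) = p(K) = 0, 0 < p(x) < 1 for all x ∈ (0,K), and (1/2)p''(x) − μp'(x) = F(1 − p(x)) on (0,K). Assume moreover that f*(x) := sin(πx/K)·e^{μx}/p(x) is bounded on (0,K). Then λ(K) ≤ ∫₀^K ((m−1)β + F(1−p(y))/p(y)) · (2/K)·sin²(πy/K) dy. -/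
/-!
With `q = p'/p` the equation for `p` becomes the Riccati equation
`q' = 2μq + 2F(1-p)/p - q²`. For a test function `φ` vanishing at the endpoints, completing the
square gives `(φ²q - μφ²)' = 2φ²F(1-p)/p + φ'² + μ²φ² - (φq - φ' - μφ)²`, hence
`-∫ (φ'² + μ²φ²) ≤ 2 ∫ φ² F(1-p)/p`. The boundary terms vanish because `φ/p` (essentially `f*`)
and `p'` are bounded, so `φ²q = φ · (φ/p) · p' → 0`. For `φ = sin(πx/K)` one has
`∫ φ'² = π²/(2K)` and `∫ φ² = K/2`, and dividing by `K` gives the bound.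
-/

open MeasureTheory Set Filter Topology intervalIntegral Real

theorem exists_norm_deriv_le_of_contDiffOn_Icc {a b : ℝ} {p : ℝ → ℝ} (hab : a < b)
    (hp : ContDiffOn ℝ 1 p (Icc a b)) : ∃ M, ∀ x ∈ Ioo a b, ‖deriv p x‖ ≤ M := by
  obtain ⟨M, hM⟩ := isCompact_Icc.exists_bound_of_continuousOn
    (hp.continuousOn_derivWithin (uniqueDiffOn_Icc hab) le_rfl)
  refine ⟨M, fun x hx => ?_⟩
  rw [← derivWithin_of_mem_nhds (Icc_mem_nhds hx.1 hx.2)]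
  exact hM x (Ioo_subset_Icc_self hx)

theorem integrableOn_Icc_of_continuousOn_Ioo_of_norm_le {a b C : ℝ} {f : ℝ → ℝ}
    (hf : ContinuousOn f (Ioo a b)) (hC : ∀ x ∈ Ioo a b, ‖f x‖ ≤ C) :
    IntegrableOn f (Icc a b) := by
  rw [integrableOn_Icc_iff_integrableOn_Ioo]
  exact Integrable.mono' (integrableOn_const measure_Ioo_lt_top.ne)
    (hf.aestronglyMeasurable measurableSet_Ioo) (ae_restrict_of_forall_mem measurableSet_Ioo hC)

theorem abs_div_le_abs_mul_exp_div {a q t : ℝ} (ht : 0 ≤ t) : |a / q| ≤ |a * exp t / q| := by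
  rw [mul_div_right_comm, abs_mul, abs_of_pos (exp_pos t)]
  exact le_mul_of_one_le_right (abs_nonneg _) (one_le_exp ht)

noncomputable def picone (μ : ℝ) (p φ : ℝ → ℝ) (x : ℝ) : ℝ :=
  φ x ^ 2 * (deriv p x / p x) - μ * φ x ^ 2

theorem hasDerivAt_picone {μ x φ' : ℝ} {p φ : ℝ → ℝ} (hφ : HasDerivAt φ φ' x)
    (hp : DifferentiableAt ℝ p x) (hp' : DifferentiableAt ℝ (deriv p) x) (hpx : p x ≠ 0) :
    HasDerivAt (picone μ p φ)
      (2 * (((1 / 2) * deriv (deriv p) x - μ * deriv p x) / p x * φ x ^ 2)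
        - (φ x * deriv p x / p x - φ' - μ * φ x) ^ 2 + (φ' ^ 2 + μ ^ 2 * φ x ^ 2)) x := by
  refine (((hφ.pow 2).mul (hp'.hasDerivAt.div hp.hasDerivAt hpx)).sub
    ((hφ.pow 2).const_mul μ)).congr_deriv ?_
  simp only [Pi.div_apply, Pi.pow_apply]
  field_simp
  ring

theorem tendsto_picone_of_eq_zero {μ x₀ C : ℝ} {p φ : ℝ → ℝ} {s : Set ℝ}
    (hφ : ContinuousAt φ x₀) (hφ0 : φ x₀ = 0) (hbd : ∀ y ∈ s, |φ y * deriv p y / p y| ≤ C) :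
    Tendsto (picone μ p φ) (𝓝[s] x₀) (𝓝 0) := by
  have hφs : Tendsto φ (𝓝[s] x₀) (𝓝 0) := hφ0 ▸ hφ.tendsto.mono_left nhdsWithin_le_nhds
  have hquot : IsBoundedUnder (· ≤ ·) (𝓝[s] x₀) fun y => ‖φ y * deriv p y / p y‖ :=
    isBoundedUnder_of_eventually_le (eventually_nhdsWithin_of_forall hbd)
  have h := (hφs.zero_mul_isBoundedUnder_le hquot).sub ((hφs.pow 2).const_mul μ)
  rw [zero_pow two_ne_zero, mul_zero, sub_zero] at h
  refine h.congr fun y => ?_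
  simp only [picone]
  ring

theorem continuousOn_picone {a b μ C : ℝ} {p φ : ℝ → ℝ} (hab : a < b)
    (hφ : ∀ x, ContinuousAt φ x) (hφa : φ a = 0) (hφb : φ b = 0)
    (hbd : ∀ x ∈ Ioo a b, |φ x * deriv p x / p x| ≤ C)
    (hinterior : ∀ x ∈ Ioo a b, ContinuousAt (picone μ p φ) x) :
    ContinuousOn (picone μ p φ) (Icc a b) := by
  have hzero : ∀ x, φ x = 0 → picone μ p φ x = 0 := fun x hx => by simp [picone, hx]
  intro x hx
  rcases eq_endpoints_or_mem_Ioo_of_mem_Icc hx with rfl | rfl | hx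
  · have h : ContinuousWithinAt (picone μ p φ) (Ioo x b) x := by
      rw [ContinuousWithinAt, hzero x hφa]
      exact tendsto_picone_of_eq_zero (hφ x) hφa hbd
    exact (continuousWithinAt_Icc_iff_Ici hab).2
      (continuousWithinAt_Ioi_iff_Ici.1 ((continuousWithinAt_Ioo_iff_Ioi hab).1 h))
  · have h : ContinuousWithinAt (picone μ p φ) (Ioo a x) x := by
      rw [ContinuousWithinAt, hzero x hφb]
      exact tendsto_picone_of_eq_zero (hφ x) hφb hbd
    exact (continuousWithinAt_Icc_iff_Iic hab).2
      (continuousWithinAt_Iio_iff_Iic.1 ((continuousWithinAt_Ioo_iff_Iio hab).1 h))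
  · exact (hinterior x hx).continuousWithinAt

theorem picone_inequality {a b μ C : ℝ} {p φ φ' L : ℝ → ℝ} (hab : a < b)
    (hφ : ∀ x, HasDerivAt φ (φ' x) x) (hφ' : Continuous φ') (hφa : φ a = 0) (hφb : φ b = 0)
    (hp : DifferentiableOn ℝ p (Ioo a b)) (hp' : DifferentiableOn ℝ (deriv p) (Ioo a b))
    (hpne : ∀ x ∈ Ioo a b, p x ≠ 0)
    (hL : ∀ x ∈ Ioo a b, (1 / 2) * deriv (deriv p) x - μ * deriv p x = L x)
    (hbd : ∀ x ∈ Ioo a b, |φ x * deriv p x / p x| ≤ C)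
    (hint : IntegrableOn (fun x => L x / p x * φ x ^ 2) (Icc a b)) :
    -∫ x in a..b, (φ' x ^ 2 + μ ^ 2 * φ x ^ 2) ≤ 2 * ∫ x in a..b, L x / p x * φ x ^ 2 := by
  have hφc : Continuous φ := continuous_iff_continuousAt.2 fun x => (hφ x).continuousAt
  have hderiv : ∀ x ∈ Ioo a b, HasDerivAt (picone μ p φ)
      (2 * (L x / p x * φ x ^ 2) - (φ x * deriv p x / p x - φ' x - μ * φ x) ^ 2
        + (φ' x ^ 2 + μ ^ 2 * φ x ^ 2)) x := fun x hx => by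
    rw [← hL x hx]
    exact hasDerivAt_picone (hφ x) (hp.differentiableAt (Ioo_mem_nhds hx.1 hx.2))
      (hp'.differentiableAt (Ioo_mem_nhds hx.1 hx.2)) (hpne x hx)
  have hcont : ContinuousOn (picone μ p φ) (Icc a b) :=
    continuousOn_picone hab (fun x => (hφ x).continuousAt) hφa hφb hbd
      fun x hx => (hderiv x hx).continuousAt
  have henergy : IntegrableOn (fun x => φ' x ^ 2 + μ ^ 2 * φ x ^ 2) (Icc a b) :=
    ((hφ'.pow 2).add (continuous_const.mul (hφc.pow 2))).integrableOn_Icc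
  -- only the upper bound of the derivative has to be integrable, not the derivative itself
  have h := sub_le_integral_of_hasDeriv_right_of_le
    (φ := fun x => 2 * (L x / p x * φ x ^ 2) + (φ' x ^ 2 + μ ^ 2 * φ x ^ 2))
    hab.le hcont (fun x hx => (hderiv x hx).hasDerivWithinAt)
    (by exact (hint.const_mul 2).add henergy)
    (fun x _ => by nlinarith [sq_nonneg (φ x * deriv p x / p x - φ' x - μ * φ x)])
  rw [intervalIntegral.integral_add
    ((intervalIntegrable_iff_integrableOn_Icc_of_le hab.le).2 (hint.const_mul 2))
    ((intervalIntegrable_iff_integrableOn_Icc_of_le hab.le).2 henergy),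
    intervalIntegral.integral_const_mul] at h
  simp only [picone, hφa, hφb] at h
  linarith

theorem hasDerivAt_sin_pi_mul_div (K x : ℝ) :
    HasDerivAt (fun y => sin (π * y / K)) (π / K * cos (π * x / K)) x := by
  simpa [mul_comm, mul_div_assoc] using ((hasDerivAt_id x).const_mul π).div_const K |>.sin

theorem integral_sin_sq_pi_mul_div {K : ℝ} (hK : K ≠ 0) :
    ∫ x in (0 : ℝ)..K, sin (π * x / K) ^ 2 = K / 2 := by
  simp_rw [mul_div_right_comm π]
  rw [intervalIntegral.integral_comp_mul_left (fun t => sin t ^ 2) (div_ne_zero pi_ne_zero hK),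
    integral_sin_sq]
  simp [field, hK]

theorem integral_cos_sq_pi_mul_div {K : ℝ} (hK : K ≠ 0) :
    ∫ x in (0 : ℝ)..K, cos (π * x / K) ^ 2 = K / 2 := by
  simp_rw [mul_div_right_comm π]
  rw [intervalIntegral.integral_comp_mul_left (fun t => cos t ^ 2) (div_ne_zero pi_ne_zero hK),
    integral_cos_sq]
  simp [field, hK]

theorem integral_energy_sin_pi_mul_div {K : ℝ} (hK : K ≠ 0) (μ : ℝ) :
    ∫ x in (0 : ℝ)..K, ((π / K * cos (π * x / K)) ^ 2 + μ ^ 2 * sin (π * x / K) ^ 2)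
      = (π ^ 2 / K ^ 2 + μ ^ 2) * (K / 2) := by
  simp_rw [mul_pow]
  rw [intervalIntegral.integral_add (by apply Continuous.intervalIntegrable; fun_prop)
      (by apply Continuous.intervalIntegrable; fun_prop),
    intervalIntegral.integral_const_mul, intervalIntegral.integral_const_mul,
    integral_sin_sq_pi_mul_div hK, integral_cos_sq_pi_mul_div hK]
  ring

theorem integral_add_mul_sin_sq_density {K c : ℝ} {g : ℝ → ℝ} (hK : K ≠ 0)
    (hg : IntervalIntegrable (fun y => g y * sin (π * y / K) ^ 2) volume 0 K) :
    ∫ y in (0 : ℝ)..K, (c + g y) * ((2 / K) * sin (π * y / K) ^ 2)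
      = c + 2 / K * ∫ y in (0 : ℝ)..K, g y * sin (π * y / K) ^ 2 := by
  have hsplit : ∀ y, (c + g y) * ((2 / K) * sin (π * y / K) ^ 2)
      = c * (2 / K) * sin (π * y / K) ^ 2 + 2 / K * (g y * sin (π * y / K) ^ 2) :=
    fun y => by ring
  simp_rw [hsplit]
  rw [intervalIntegral.integral_add (by apply Continuous.intervalIntegrable; fun_prop)
      (hg.const_mul _), intervalIntegral.integral_const_mul, intervalIntegral.integral_const_mul,
    integral_sin_sq_pi_mul_div hK]
  field_simp

theorem growth_rate_upper_bound_general (K μ β m : ℝ) (hK : 0 < K) (hμ : 0 ≤ μ)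
    (F : ℝ → ℝ) (hF : Continuous F) (p : ℝ → ℝ)
    (hp1 : ContDiffOn ℝ 1 p (Set.Icc 0 K))
    (hp2 : ContDiffOn ℝ 2 p (Set.Ioo 0 K))
    (hp01 : ∀ x ∈ Set.Ioo 0 K, p x ∈ Set.Ioo (0:ℝ) 1)
    (hode : ∀ x ∈ Set.Ioo 0 K, (1/2) * deriv (deriv p) x - μ * deriv p x = F (1 - p x))
    (hfb : ∃ C : ℝ, ∀ x ∈ Set.Ioo 0 K,
      |Real.sin (Real.pi * x / K) * Real.exp (μ * x) / p x| ≤ C) :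
    (m - 1) * β - μ ^ 2 / 2 - Real.pi ^ 2 / (2 * K ^ 2)
      ≤ ∫ y in (0:ℝ)..K,
          ((m - 1) * β + F (1 - p y) / p y) * ((2 / K) * Real.sin (Real.pi * y / K) ^ 2) := by
  obtain ⟨C, hC⟩ := hfb
  obtain ⟨M, hM⟩ := exists_norm_deriv_le_of_contDiffOn_Icc hK hp1
  obtain ⟨N, hN⟩ := isCompact_Icc.exists_bound_of_continuousOn (hF.continuousOn (s := Icc 0 1))
  have hpc : ContinuousOn p (Ioo 0 K) := hp2.continuousOn
  have hpne : ∀ x ∈ Ioo 0 K, p x ≠ 0 := fun x hx => (hp01 x hx).1.ne'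
  have hdecay : ∀ x ∈ Ioo 0 K, |sin (π * x / K) / p x| ≤ C := fun x hx =>
    (abs_div_le_abs_mul_exp_div (mul_nonneg hμ hx.1.le)).trans (hC x hx)
  have hint : IntegrableOn (fun x => F (1 - p x) / p x * sin (π * x / K) ^ 2) (Icc 0 K) := by
    refine integrableOn_Icc_of_continuousOn_Ioo_of_norm_le (C := N * C * 1)
      (((hF.comp_continuousOn (continuousOn_const.sub hpc)).div hpc hpne).mul
        (by fun_prop : Continuous fun x => sin (π * x / K) ^ 2).continuousOn) fun x hx => ?_
    rw [show F (1 - p x) / p x * sin (π * x / K) ^ 2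
      = F (1 - p x) * (sin (π * x / K) / p x) * sin (π * x / K) by ring]
    exact norm_mul_le_of_le (norm_mul_le_of_le
      (hN _ ⟨by linarith [(hp01 x hx).2], by linarith [(hp01 x hx).1]⟩) (hdecay x hx))
      (abs_sin_le_one _)
  have key := picone_inequality hK (hasDerivAt_sin_pi_mul_div K) (by fun_prop) (by simp)
    (by simp [hK.ne']) (hp2.differentiableOn (by norm_num))
    ((hp2.deriv_of_isOpen isOpen_Ioo (m := 1) (by norm_num)).differentiableOn one_ne_zero)
    hpne hode (fun x hx => by
      rw [mul_div_right_comm]; exact norm_mul_le_of_le (hdecay x hx) (hM x hx)) hint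
  rw [integral_energy_sin_pi_mul_div hK.ne'] at key
  rw [integral_add_mul_sin_sq_density hK.ne'
    ((intervalIntegrable_iff_integrableOn_Icc_of_le hK.le).2 hint)]
  calc (m - 1) * β - μ ^ 2 / 2 - π ^ 2 / (2 * K ^ 2)
      = (m - 1) * β + 1 / K * -((π ^ 2 / K ^ 2 + μ ^ 2) * (K / 2)) := by
        field_simp; ring
    _ ≤ (m - 1) * β + 1 / K * (2 * ∫ x in (0 : ℝ)..K, F (1 - p x) / p x * sin (π * x / K) ^ 2) := by
        gcongr
    _ = _ := by ring

/-- Lemma 4.7 in deterministic form: with `λ(K) = (m−1)β − μ²/2 − π²/(2K²)`, `F` continuous,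
`p` C¹ on `[0,K]` and C² on `(0,K)` with `p(0) = p(K) = 0`, `0 < p < 1` on `(0,K)`,
`(1/2)p'' − μp' = F(1−p)` on `(0,K)`, and `f*(x) = sin(πx/K)e^{μx}/p(x)` bounded on `(0,K)`,
one has `λ(K) ≤ ∫₀^K ((m−1)β + F(1−p(y))/p(y))·(2/K)sin²(πy/K) dy`. -/
theorem growth_rate_upper_bound (K μ β m : ℝ) (hK : 0 < K) (hμ : 0 ≤ μ) (hβ : 0 < β)
    (hm : 1 < m) (F : ℝ → ℝ) (hF : Continuous F) (p : ℝ → ℝ)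
    (hp1 : ContDiffOn ℝ 1 p (Set.Icc 0 K))
    (hp2 : ContDiffOn ℝ 2 p (Set.Ioo 0 K))
    (hp0 : p 0 = 0) (hpK : p K = 0)
    (hp01 : ∀ x ∈ Set.Ioo 0 K, p x ∈ Set.Ioo (0:ℝ) 1)
    (hode : ∀ x ∈ Set.Ioo 0 K, (1/2) * deriv (deriv p) x - μ * deriv p x = F (1 - p x))
    (hfb : ∃ C : ℝ, ∀ x ∈ Set.Ioo 0 K,
      |Real.sin (Real.pi * x / K) * Real.exp (μ * x) / p x| ≤ C) :
    (m - 1) * β - μ ^ 2 / 2 - Real.pi ^ 2 / (2 * K ^ 2)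
      ≤ ∫ y in (0:ℝ)..K,
          ((m - 1) * β + F (1 - p y) / p y) * ((2 / K) * Real.sin (Real.pi * y / K) ^ 2) :=
  growth_rate_upper_bound_general K μ β m hK hμ F hF p hp1 hp2 hp01 hode hfb
end

section
/- Let β > 0 and let (qₙ)_{n≥0} be nonnegative real numbers with Σₙ qₙ = 1; set G(s) = Σₙ qₙ·sⁿ and F(s) = β(G(s) − s) for s ∈ [0,1]. Then for every p ∈ (0,1) and every s ∈ [0,1], (1/p)·(F(s·p + (1−p)) − (1−s)·F(1−p)) = β·Σ_{k≥2} (s^k − s)·p^{k−1}·(Σ_{n≥k} qₙ·C(n,k)·(1−p)^{n−k}), where C(n,k) denotes the binomial coefficient and all the series converge. -/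
/-!
Expanding `(a + b)ⁿ` binomially turns `G(a + b) = ∑ₙ qₙ (a + b)ⁿ` into a nonnegative double series
in `(n, k)`; summing it column by column gives `G(a + b) = ∑ₖ aᵏ Tₖ(b)`, where
`Tₖ(b) = ∑ₙ qₙ C(n,k) bⁿ⁻ᵏ` is the `k`-th Taylor coefficient of `G` at `b`. With `b = 1 - p`,
`a = p` and `a = sp` this gives `1 = ∑ₖ pᵏ Tₖ` and `G(sp + 1 - p) = ∑ₖ sᵏ pᵏ Tₖ`, hence
`G(sp + 1 - p) - s = ∑ₖ (sᵏ - s) pᵏ Tₖ`. Here the `k = 0` term is `(1 - s) G(1 - p)` and the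
`k = 1` term vanishes, which leaves exactly the claimed series over `k ≥ 2`.
-/

namespace BranchingMechanism

open Finset

noncomputable def binomialFamily (q : ℕ → ℝ) (a b : ℝ) (nk : ℕ × ℕ) : ℝ :=
  q nk.1 * (nk.1.choose nk.2 : ℝ) * a ^ nk.2 * b ^ (nk.1 - nk.2)

noncomputable def taylorCoeff (q : ℕ → ℝ) (b : ℝ) (k : ℕ) : ℝ :=
  ∑' n, q n * (n.choose k : ℝ) * b ^ (n - k)

variable {q : ℕ → ℝ} {a b : ℝ}

lemma binomialFamily_nonneg (hq : ∀ n, 0 ≤ q n) (ha : 0 ≤ a) (hb : 0 ≤ b) :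
    0 ≤ binomialFamily q a b := fun _ =>
  mul_nonneg (mul_nonneg (mul_nonneg (hq _) (Nat.cast_nonneg _)) (pow_nonneg ha _)) (pow_nonneg hb _)

lemma hasSum_binomialFamily_row (q : ℕ → ℝ) (a b : ℝ) (n : ℕ) :
    HasSum (fun k => binomialFamily q a b (n, k)) (q n * (a + b) ^ n) := by
  have hvanish : ∀ k ∉ range (n + 1), binomialFamily q a b (n, k) = 0 := fun k hk => by
    rw [mem_range, not_lt] at hk
    simp [binomialFamily, Nat.choose_eq_zero_of_lt (Nat.lt_of_succ_le hk)]
  have hexpand : q n * (a + b) ^ n = ∑ k ∈ range (n + 1), binomialFamily q a b (n, k) := by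
    rw [add_pow, mul_sum]
    exact sum_congr rfl fun k _ => by simp only [binomialFamily]; ring
  exact hexpand ▸ hasSum_sum_of_ne_finset_zero hvanish

lemma summable_binomialFamily (hq : ∀ n, 0 ≤ q n) (ha : 0 ≤ a) (hb : 0 ≤ b)
    (hG : Summable fun n => q n * (a + b) ^ n) : Summable (binomialFamily q a b) :=
  (summable_prod_of_nonneg (binomialFamily_nonneg hq ha hb)).2
    ⟨fun n => (hasSum_binomialFamily_row q a b n).summable,
      hG.congr fun n => (hasSum_binomialFamily_row q a b n).tsum_eq.symm⟩

lemma hasSum_pow_mul_taylorCoeff (hq : ∀ n, 0 ≤ q n) (ha : 0 ≤ a) (hb : 0 ≤ b)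
    (hG : Summable fun n => q n * (a + b) ^ n) :
    HasSum (fun k => a ^ k * taylorCoeff q b k) (∑' n, q n * (a + b) ^ n) := by
  have hF := summable_binomialFamily hq ha hb hG
  have hrows : HasSum (binomialFamily q a b) (∑' n, q n * (a + b) ^ n) :=
    (hF.hasSum.prod_fiberwise (hasSum_binomialFamily_row q a b)).tsum_eq ▸ hF.hasSum
  have hswap : HasSum (fun kn : ℕ × ℕ => binomialFamily q a b kn.swap) (∑' n, q n * (a + b) ^ n) :=
    (Equiv.prodComm ℕ ℕ).hasSum_iff.2 hrows
  refine hswap.prod_fiberwise fun k => ?_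
  have hcol : ∑' n, binomialFamily q a b (n, k) = a ^ k * taylorCoeff q b k := by
    rw [taylorCoeff, ← tsum_mul_left]
    exact tsum_congr fun n => by simp only [binomialFamily]; ring
  exact hcol ▸ (hswap.summable.prod_factor k).hasSum

lemma summable_taylorCoeff_terms (hq : ∀ n, 0 ≤ q n) (ha : 0 < a) (hb : 0 ≤ b)
    (hG : Summable fun n => q n * (a + b) ^ n) (k : ℕ) :
    Summable fun n => q n * (n.choose k : ℝ) * b ^ (n - k) := by
  refine ((summable_binomialFamily hq ha.le hb hG).prod_symm.prod_factor k |>.mul_left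
    (a ^ k)⁻¹).congr fun n => ?_
  simp only [binomialFamily, Prod.swap]
  field_simp

lemma hasSum_pow_sub_mul_taylorCoeff (hq : ∀ n, 0 ≤ q n) (hsum : HasSum q 1) {p s : ℝ} (hp0 : 0 < p)
    (hp1 : p ≤ 1) (hs0 : 0 ≤ s) (hs1 : s ≤ 1) :
    HasSum (fun k => (s ^ (k + 2) - s) * p ^ (k + 1) * taylorCoeff q (1 - p) (k + 2))
      ((∑' n, q n * (s * p + (1 - p)) ^ n - s - (1 - s) * ∑' n, q n * (1 - p) ^ n) / p) := by
  have hx : 0 ≤ 1 - p := by linarith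
  have hGs : Summable fun n => q n * (s * p + (1 - p)) ^ n :=
    hsum.summable.of_nonneg_of_le (fun n => mul_nonneg (hq n) (by positivity)) fun n =>
      mul_le_of_le_one_right (hq n) (pow_le_one₀ (by positivity) (by nlinarith))
  have hone := hasSum_pow_mul_taylorCoeff hq hp0.le hx (by simpa using hsum.summable)
  simp only [add_sub_cancel, one_pow, mul_one, hsum.tsum_eq] at hone
  have hval := hasSum_pow_mul_taylorCoeff hq (by positivity) hx hGs
  have hT0 : taylorCoeff q (1 - p) 0 = ∑' n, q n * (1 - p) ^ n := by simp [taylorCoeff]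
  have hdiff := hval.sub (hone.mul_left s)
  rw [← hasSum_nat_add_iff' 2, sum_range_succ, sum_range_one, hT0] at hdiff
  convert hdiff.div_const p using 2 with k
  · rfl -- two paths to `AddCommMonoid ℝ`
  · field_simp
    ring
  · ring

end BranchingMechanism

open BranchingMechanism in
theorem blue_branching_mechanism_general (β : ℝ) (q : ℕ → ℝ) (hq : ∀ n, 0 ≤ q n)
    (hsum : ∑' n, q n = 1) (p s : ℝ) (hp : p ∈ Set.Ioo (0:ℝ) 1) (hs : s ∈ Set.Icc (0:ℝ) 1) :
    (∀ k : ℕ, 2 ≤ k → Summable (fun n : ℕ => q n * (n.choose k : ℝ) * (1 - p) ^ (n - k))) ∧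
    Summable (fun k : ℕ => (s ^ (k + 2) - s) * p ^ (k + 1) *
      ∑' n : ℕ, q n * (n.choose (k + 2) : ℝ) * (1 - p) ^ (n - (k + 2))) ∧
    (1 / p) *
      ((β * ((∑' n : ℕ, q n * (s * p + (1 - p)) ^ n) - (s * p + (1 - p))))
        - (1 - s) * (β * ((∑' n : ℕ, q n * (1 - p) ^ n) - (1 - p))))
      = β * ∑' k : ℕ, (s ^ (k + 2) - s) * p ^ (k + 1) *
          ∑' n : ℕ, q n * (n.choose (k + 2) : ℝ) * (1 - p) ^ (n - (k + 2)) := by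
  obtain ⟨hp0, hp1⟩ := hp
  have hq1 : Summable q := by
    by_contra h
    simp [tsum_eq_zero_of_not_summable h] at hsum
  have hseries := hasSum_pow_sub_mul_taylorCoeff hq (hsum ▸ hq1.hasSum) hp0 hp1.le hs.1 hs.2
  have hG1 : Summable fun n => q n * (p + (1 - p)) ^ n := by simpa using hq1
  refine ⟨fun k _ => summable_taylorCoeff_terms hq hp0 (by linarith) hG1 k,
    hseries.summable, ?_⟩
  unfold taylorCoeff at hseries
  rw [hseries.tsum_eq]
  field_simp
  ring

/-- Backbone branching mechanism identity: with `G(s) = Σ qₙ sⁿ`, `F(s) = β(G(s) − s)`,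
for `p ∈ (0,1)` and `s ∈ [0,1]`,
`(1/p)·(F(s·p + (1−p)) − (1−s)·F(1−p)) = β·Σ_{k≥2} (s^k − s)p^{k−1} Σ_{n≥k} qₙ C(n,k)(1−p)^{n−k}`,
and all the series converge. (The sum over `k ≥ 2` is indexed by `k + 2`, `k : ℕ`; note that
`C(n,k) = 0` for `n < k`, so the inner sums may be taken over all `n`.) -/
theorem blue_branching_mechanism (β : ℝ) (hβ : 0 < β) (q : ℕ → ℝ) (hq : ∀ n, 0 ≤ q n)
    (hsum : ∑' n, q n = 1) (p s : ℝ) (hp : p ∈ Set.Ioo (0:ℝ) 1) (hs : s ∈ Set.Icc (0:ℝ) 1) :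
    (∀ k : ℕ, 2 ≤ k → Summable (fun n : ℕ => q n * (n.choose k : ℝ) * (1 - p) ^ (n - k))) ∧
    Summable (fun k : ℕ => (s ^ (k + 2) - s) * p ^ (k + 1) *
      ∑' n : ℕ, q n * (n.choose (k + 2) : ℝ) * (1 - p) ^ (n - (k + 2))) ∧
    (1 / p) *
      ((β * ((∑' n : ℕ, q n * (s * p + (1 - p)) ^ n) - (s * p + (1 - p))))
        - (1 - s) * (β * ((∑' n : ℕ, q n * (1 - p) ^ n) - (1 - p))))
      = β * ∑' k : ℕ, (s ^ (k + 2) - s) * p ^ (k + 1) *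
          ∑' n : ℕ, q n * (n.choose (k + 2) : ℝ) * (1 - p) ^ (n - (k + 2)) :=
  blue_branching_mechanism_general β q hq hsum p s hp hs
end
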